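/- arXiv:2305.08269 — 5 statements merged into one kernel-verified Lean document; each statement's English description precedes it below -/
import Mathlib

section
/- Let G = (V, E) be a connected undirected simple graph, let W = (w_1, …, w_s) be a walk in G, and let f : V → ℝ be valid for W. Then the last vertex w_s of the walk is a local minimum of f, and it is the unique local minimum of f: every vertex v ≠ w_s has a neighbor u with f(u) < f(v). -/
/-!
A vertex `v ≠ w_s` on the walk is followed, right after its last visit, by a vertex visited
later, which therefore has a smaller value; `w_s`, visited last, has the least value on the
walk, and all values off the walk are positive. A vertex `v` off the walk has a neighbour one
step closer to `w_1`, whose value is either `≤ 0` (on the walk) or `dist(w_1, v) - 1`.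
-/

/-- The 1-based index of the last occurrence of `v` on the list `W`, i.e.
`max {i ∈ [s] : w_i = v}` when `v` appears on `W` (where `s = W.length`). -/
def lastIdx {α : Type*} [DecidableEq α] (W : List α) (v : α) : ℕ :=
  W.length - W.reverse.idxOf v

theorem List.idxOf_getElem_le {α : Type*} [DecidableEq α] (l : List α) (i : ℕ)
    (hi : i < l.length) : l.idxOf l[i] ≤ i :=
  Nat.le_of_not_lt fun h => by simpa using List.not_of_lt_findIdx h

section lastIdx

variable {α : Type*} [DecidableEq α] {W : List α}

theorem lastIdx_le_length (W : List α) (v : α) : lastIdx W v ≤ W.length := Nat.sub_le _ _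

theorem succ_le_lastIdx_getElem (i : ℕ) (hi : i < W.length) : i + 1 ≤ lastIdx W W[i] := by
  have hj : W.length - 1 - i < W.reverse.length := by simp only [List.length_reverse]; omega
  have := W.reverse.idxOf_getElem_le _ hj
  rw [List.getElem_reverse] at this
  simp only [lastIdx, show W.length - 1 - (W.length - 1 - i) = i by omega] at this ⊢
  omega

theorem exists_getElem_eq_and_lastIdx_eq {v : α} (hv : v ∈ W) :
    ∃ (i : ℕ) (hi : i < W.length), W[i] = v ∧ lastIdx W v = i + 1 := by
  have hj : W.reverse.idxOf v < W.reverse.length := List.idxOf_lt_length_of_mem (by simpa)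
  have hget := List.getElem_idxOf hj
  rw [List.getElem_reverse] at hget
  rw [List.length_reverse] at hj
  exact ⟨_, _, hget, by unfold lastIdx; omega⟩

theorem lastIdx_getLast (hW : W ≠ []) : lastIdx W (W.getLast hW) = W.length := by
  have hpos := List.length_pos_iff.mpr hW
  have := succ_le_lastIdx_getElem (W := W) (W.length - 1) (by omega)
  rw [← List.getLast_eq_getElem hW] at this
  exact le_antisymm (lastIdx_le_length W _) (by omega)

theorem lastIdx_lt_length (hW : W ≠ []) {v : α} (hv : v ∈ W) (hne : v ≠ W.getLast hW) :
    lastIdx W v < W.length := by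
  obtain ⟨i, hi, rfl, hidx⟩ := exists_getElem_eq_and_lastIdx_eq hv
  refine lt_of_le_of_ne (lastIdx_le_length W _) fun h => hne ?_
  simp only [List.getLast_eq_getElem]
  congr 1
  omega

theorem List.IsChain.exists_rel_lastIdx_lt {R : α → α → Prop} (hR : W.IsChain R)
    (hW : W ≠ []) {v : α} (hv : v ∈ W) (hne : v ≠ W.getLast hW) :
    ∃ u ∈ W, R v u ∧ lastIdx W v < lastIdx W u := by
  have hlt := lastIdx_lt_length hW hv hne
  obtain ⟨i, hi, rfl, hidx⟩ := exists_getElem_eq_and_lastIdx_eq hv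
  have hi' : i + 1 < W.length := by omega
  refine ⟨W[i + 1], List.getElem_mem hi', List.isChain_iff_getElem.mp hR i hi', ?_⟩
  have := succ_le_lastIdx_getElem (i + 1) hi'
  omega

end lastIdx

theorem SimpleGraph.exists_adj_dist_add_one_eq {V : Type*} {G : SimpleGraph V} {a v : V}
    (h : 0 < G.dist a v) : ∃ u, G.Adj v u ∧ G.dist a u + 1 = G.dist a v := by
  obtain ⟨p, hp⟩ := exists_walk_of_dist_ne_zero h.ne'
  have hne : v ≠ a := fun hva => by simp [hva] at h
  obtain ⟨u, hadj, q, hq⟩ := p.reverse.exists_eq_cons_of_ne hne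
  have hlen : q.length + 1 = G.dist a v := by
    rw [← hp, ← Walk.length_reverse p, hq, Walk.length_cons]
  refine ⟨u, hadj, le_antisymm ?_ ?_⟩
  · rw [dist_comm, ← hlen]
    exact Nat.add_le_add_right (dist_le q) 1
  · have := hadj.symm.reachable.dist_triangle_right a
    rwa [dist_eq_one_iff_adj.mpr hadj.symm] at this

theorem stmt0_general {n : ℕ} (G : SimpleGraph (Fin n))
    (W : List (Fin n)) (hW : W ≠ []) (hwalk : W.Chain' G.Adj)
    (f : Fin n → ℝ)
    (hvalid1 : ∀ u ∈ W, ∀ v ∈ W, lastIdx W v < lastIdx W u → f u < f v)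
    (hvalid2 : ∀ v, v ∉ W → f v = (G.dist (W.head hW) v : ℝ) ∧ 0 < f v)
    (hvalid3 : ∀ w ∈ W, f w ≤ 0) :
    (∀ u, G.Adj (W.getLast hW) u → f (W.getLast hW) ≤ f u) ∧
      (∀ v, v ≠ W.getLast hW → ∃ u, G.Adj v u ∧ f u < f v) := by
  have hlast : W.getLast hW ∈ W := List.getLast_mem hW
  refine ⟨fun u _ => ?_, fun v hv => ?_⟩
  · by_cases hu : u ∈ W
    · rcases eq_or_ne u (W.getLast hW) with rfl | hne
      · exact le_rfl
      · refine (hvalid1 _ hlast u hu ?_).le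
        rw [lastIdx_getLast hW]
        exact lastIdx_lt_length hW hu hne
    · exact (hvalid3 _ hlast).trans (hvalid2 u hu).2.le
  · by_cases hvW : v ∈ W
    · obtain ⟨u, huW, hadj, hlt⟩ := hwalk.exists_rel_lastIdx_lt hW hvW hv
      exact ⟨u, hadj, hvalid1 u huW v hvW hlt⟩
    · obtain ⟨hfv, hpos⟩ := hvalid2 v hvW
      have hdist : 0 < G.dist (W.head hW) v := by exact_mod_cast hfv ▸ hpos
      obtain ⟨u, hadj, hdist_u⟩ := SimpleGraph.exists_adj_dist_add_one_eq hdist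
      refine ⟨u, hadj, ?_⟩
      by_cases huW : u ∈ W
      · exact (hvalid3 u huW).trans_lt hpos
      · rw [(hvalid2 u huW).1, hfv, ← hdist_u]
        push_cast
        linarith

/-- Let `G` be a connected undirected simple graph, `W = (w_1, …, w_s)` a
walk in `G`, and `f : V → ℝ` valid for `W`.  Then the last vertex `w_s` of the walk is a
local minimum of `f`, and it is the unique local minimum: every vertex `v ≠ w_s` has a
neighbour `u` with `f u < f v`. -/
theorem stmt0 {n : ℕ} (G : SimpleGraph (Fin n)) (hconn : G.Connected)
    (W : List (Fin n)) (hW : W ≠ []) (hwalk : W.Chain' G.Adj)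
    (f : Fin n → ℝ)
    (hvalid1 : ∀ u ∈ W, ∀ v ∈ W, lastIdx W v < lastIdx W u → f u < f v)
    (hvalid2 : ∀ v, v ∉ W → f v = (G.dist (W.head hW) v : ℝ) ∧ 0 < f v)
    (hvalid3 : ∀ w ∈ W, f w ≤ 0) :
    (∀ u, G.Adj (W.getLast hW) u → f (W.getLast hW) ≤ f u) ∧
      (∀ v, v ≠ W.getLast hW → ∃ u, G.Adj v u ∧ f u < f v) :=
  stmt0_general G W hW hwalk f hvalid1 hvalid2 hvalid3
end

section
/- Assume Σ_{F_3 ∈ ℬ} r(F_1, F_3) > 0 for every F_1 ∈ 𝒜, assume Σ_{F_3 ∈ 𝒜} r(F_3, F_2) > 0 for every F_2 ∈ ℬ, and assume there exists at least one triple (F_1, F_2, a) ∈ 𝒜 × ℬ × A with r(F_1, F_2) > 0 and F_1(a) ≠ F_2(a). Let v_min = max{ min{θ(F_1, a), θ(F_2, a)} : (F_1, F_2, a) ∈ 𝒜 × ℬ × A, r(F_1, F_2) > 0, F_1(a) ≠ F_2(a) }. Then v_min > 0, and for every 𝒵 ⊆ 𝒳 with q(𝒵) > 0 one has M(𝒵)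 ≥ q(𝒵)/(2·v_min). -/
/-!
Fix a coordinate `a` and call a vertex `F` of the bipartite weighted graph `r` light when its
cut degree `∑_{G : F a ≠ G a} r F G` is at most `v_min` times its degree. Since `r` vanishes
inside `𝒜` and inside `ℬ`, these ratios are exactly the `θ(F, a)`, so by the choice of `v_min`
every pair counted in `q(𝒵)` has a light endpoint. Charging each pair to a light endpoint bounds
the sum for `a` by twice the light cut degrees, hence by `2 v_min M(𝒵)`. Positivity of `v_min`
holds because each numerator and denominator of `θ` is at least the weight `r F₁ F₂ > 0` of the
witnessing pair.
-/

open Finset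

theorem Finset.sum_sum_le_two_mul_sum_filter_of_cover {α : Type*} (s : Finset α)
    (w : α → α → ℝ) (hsymm : ∀ x y, w x y = w y x) (hnonneg : ∀ x y, 0 ≤ w x y)
    (p : α → Prop) [DecidablePred p] (hcover : ∀ x ∈ s, ∀ y ∈ s, 0 < w x y → p x ∨ p y) :
    ∑ x ∈ s, ∑ y ∈ s, w x y ≤ 2 * ∑ x ∈ s with p x, ∑ y ∈ s, w x y := by
  have hpoint : ∀ x ∈ s, ∀ y ∈ s,
      w x y ≤ (if p x then w x y else 0) + (if p y then w x y else 0) := by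
    intro x hx y hy
    rcases (hnonneg x y).eq_or_lt with h | h
    · rw [← h]; simp
    · rcases hcover x hx y hy h with hp | hp <;>
        simp only [hp, if_true] <;> split_ifs <;> linarith [hnonneg x y]
  calc ∑ x ∈ s, ∑ y ∈ s, w x y
      ≤ ∑ x ∈ s, ∑ y ∈ s, ((if p x then w x y else 0) + (if p y then w x y else 0)) :=
        sum_le_sum fun x hx => sum_le_sum fun y hy => hpoint x hx y hy
    _ = ∑ x ∈ s with p x, ∑ y ∈ s, w x y + ∑ y ∈ s with p y, ∑ x ∈ s, w y x := by
        simp only [sum_add_distrib, sum_filter]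
        rw [sum_comm (f := fun x y => if p y then w x y else 0)]
        congr 1 <;> refine sum_congr rfl fun x _ => ?_ <;> split_ifs
        · rfl
        · exact sum_const_zero
        · exact sum_congr rfl fun y _ => hsymm y x
        · exact sum_const_zero
    _ = 2 * ∑ x ∈ s with p x, ∑ y ∈ s, w x y := by ring

theorem Finset.sum_filter_div_sum_pos {α : Type*} {s : Finset α} {p : α → Prop}
    [DecidablePred p] {f : α → ℝ} {x : α} (hf : ∀ y ∈ s, 0 ≤ f y) (hx : x ∈ s) (hpx : p x)
    (hfx : 0 < f x) :
    0 < (∑ y ∈ s with p y, f y) / ∑ y ∈ s, f y := by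
  have hnum : 0 < ∑ y ∈ s with p y, f y :=
    hfx.trans_le (single_le_sum (fun y hy => hf y (mem_filter.1 hy).1) (mem_filter.2 ⟨hx, hpx⟩))
  exact div_pos hnum (hnum.trans_le (sum_le_sum_of_subset_of_nonneg (filter_subset _ _)
    fun y hy _ => hf y hy))

section CutDegree

variable {A B : Type*}

def degree (X : Finset (A → B)) (r : (A → B) → (A → B) → ℝ) (F : A → B) : ℝ :=
  ∑ G ∈ X, r F G

theorem degree_pos {r : (A → B) → (A → B) → ℝ} (hnonneg : ∀ F G, 0 ≤ r F G)
    {X : Finset (A → B)} {F G : A → B} (hG : G ∈ X) (hr : 0 < r F G) : 0 < degree X r F :=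
  sum_pos' (fun G _ => hnonneg F G) ⟨G, hG, hr⟩

variable [DecidableEq B]

def cutDegree (X : Finset (A → B)) (r : (A → B) → (A → B) → ℝ) (a : A) (F : A → B) : ℝ :=
  ∑ G ∈ X with F a ≠ G a, r F G

variable {r : (A → B) → (A → B) → ℝ}

theorem sum_ite_ne_le_cutDegree (hnonneg : ∀ F G, 0 ≤ r F G) {Z X : Finset (A → B)}
    (hZX : Z ⊆ X) (a : A) (F : A → B) :
    ∑ G ∈ Z, (if F a ≠ G a then r F G else 0) ≤ cutDegree X r a F := by
  rw [← sum_filter]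
  exact sum_le_sum_of_subset_of_nonneg (filter_subset_filter _ hZX) fun G _ _ => hnonneg F G

theorem sum_sum_ite_ne_le_two_mul_sum_degree (hsymm : ∀ F G, r F G = r G F)
    (hnonneg : ∀ F G, 0 ≤ r F G) {Z X : Finset (A → B)} (hZX : Z ⊆ X) {a : A} {v : ℝ}
    (hv : 0 ≤ v) (hcover : ∀ F ∈ Z, ∀ G ∈ Z, 0 < r F G → F a ≠ G a →
      cutDegree X r a F ≤ v * degree X r F ∨ cutDegree X r a G ≤ v * degree X r G) :
    ∑ F ∈ Z, ∑ G ∈ Z, (if F a ≠ G a then r F G else 0) ≤ 2 * v * ∑ F ∈ Z, degree X r F := by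
  calc ∑ F ∈ Z, ∑ G ∈ Z, (if F a ≠ G a then r F G else 0)
      ≤ 2 * ∑ F ∈ Z with cutDegree X r a F ≤ v * degree X r F,
          ∑ G ∈ Z, (if F a ≠ G a then r F G else 0) := by
        refine sum_sum_le_two_mul_sum_filter_of_cover Z _
          (fun F G => by simp only [hsymm F G, ne_comm]) (fun F G => by split_ifs <;> simp [hnonneg]) _ fun F hF G hG hw => ?_
        split_ifs at hw with hne
        exacts [hcover F hF G hG hw hne, (lt_irrefl 0 hw).elim]
    _ ≤ 2 * ∑ F ∈ Z with cutDegree X r a F ≤ v * degree X r F, v * degree X r F := by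
        gcongr with F hF
        exact (sum_ite_ne_le_cutDegree hnonneg hZX a F).trans (mem_filter.1 hF).2
    _ ≤ 2 * ∑ F ∈ Z, v * degree X r F := by
        gcongr
        · exact fun F _ _ => mul_nonneg hv (sum_nonneg fun G _ => hnonneg F G)
        · exact filter_subset _ _
    _ = 2 * v * ∑ F ∈ Z, degree X r F := by simp only [mul_sum, mul_assoc]

variable [DecidableEq (A → B)] {𝒜 ℬ : Finset (A → B)}

theorem cutDegree_div_degree_union_of_left (a : A) {F : A → B} (hF : ∀ G ∈ 𝒜, r F G = 0) :
    cutDegree (𝒜 ∪ ℬ) r a F / degree (𝒜 ∪ ℬ) r F =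
      (∑ G ∈ ℬ with F a ≠ G a, r F G) / ∑ G ∈ ℬ, r F G := by
  rw [cutDegree, degree, filter_union, sum_union_eq_right fun G hG _ => hF G (mem_filter.1 hG).1,
    sum_union_eq_right fun G hG _ => hF G hG]

theorem cutDegree_div_degree_union_of_right (hsymm : ∀ F G, r F G = r G F) (a : A) {G : A → B}
    (hG : ∀ F ∈ ℬ, r G F = 0) :
    cutDegree (𝒜 ∪ ℬ) r a G / degree (𝒜 ∪ ℬ) r G =
      (∑ F ∈ 𝒜 with G a ≠ F a, r F G) / ∑ F ∈ 𝒜, r F G := by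
  rw [union_comm, cutDegree_div_degree_union_of_left a hG]
  simp only [hsymm G]

theorem cutDegree_le_or_cutDegree_le_of_bipartite (hsymm : ∀ F G, r F G = r G F)
    (hnonneg : ∀ F G, 0 ≤ r F G)
    (hzero : ∀ F G, ((F ∈ 𝒜 ∧ G ∈ 𝒜) ∨ (F ∈ ℬ ∧ G ∈ ℬ)) → r F G = 0) {a : A} {v : ℝ}
    (hv : ∀ F ∈ 𝒜, ∀ G ∈ ℬ, 0 < r F G → F a ≠ G a →
      min (cutDegree (𝒜 ∪ ℬ) r a F / degree (𝒜 ∪ ℬ) r F)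
        (cutDegree (𝒜 ∪ ℬ) r a G / degree (𝒜 ∪ ℬ) r G) ≤ v) :
    ∀ F ∈ 𝒜 ∪ ℬ, ∀ G ∈ 𝒜 ∪ ℬ, 0 < r F G → F a ≠ G a →
      cutDegree (𝒜 ∪ ℬ) r a F ≤ v * degree (𝒜 ∪ ℬ) r F ∨
        cutDegree (𝒜 ∪ ℬ) r a G ≤ v * degree (𝒜 ∪ ℬ) r G := by
  have hcross : ∀ F ∈ 𝒜, ∀ G ∈ ℬ, 0 < r F G → F a ≠ G a →
      cutDegree (𝒜 ∪ ℬ) r a F ≤ v * degree (𝒜 ∪ ℬ) r F ∨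
        cutDegree (𝒜 ∪ ℬ) r a G ≤ v * degree (𝒜 ∪ ℬ) r G := by
    intro F hF G hG hr hne
    have hFpos := degree_pos hnonneg (mem_union_right 𝒜 hG) hr
    have hGpos := degree_pos hnonneg (mem_union_left ℬ hF) (hsymm F G ▸ hr)
    rcases min_le_iff.1 (hv F hF G hG hr hne) with h | h
    exacts [Or.inl ((div_le_iff₀ hFpos).1 h), Or.inr ((div_le_iff₀ hGpos).1 h)]
  intro F hF G hG hr hne
  rcases mem_union.1 hF with hF | hF <;> rcases mem_union.1 hG with hG | hG
  · exact absurd (hzero F G (Or.inl ⟨hF, hG⟩)) hr.ne'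
  · exact hcross F hF G hG hr hne
  · exact (hcross G hG F hF (hsymm F G ▸ hr) hne.symm).symm
  · exact absurd (hzero F G (Or.inr ⟨hF, hG⟩)) hr.ne'

end CutDegree

theorem stmt5_general {A B : Type*} [Fintype A] [Nonempty A] [DecidableEq B]
    (𝒜 ℬ : Finset (A → B))
    (r : (A → B) → (A → B) → ℝ)
    (hsymm : ∀ F₁ F₂, r F₁ F₂ = r F₂ F₁)
    (hnonneg : ∀ F₁ F₂, 0 ≤ r F₁ F₂)
    (hzero : ∀ F₁ F₂, ((F₁ ∈ 𝒜 ∧ F₂ ∈ 𝒜) ∨ (F₁ ∈ ℬ ∧ F₂ ∈ ℬ)) → r F₁ F₂ = 0)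
    (vmin : ℝ)
    (hvmin : IsGreatest {w : ℝ | ∃ F₁ ∈ 𝒜, ∃ F₂ ∈ ℬ, ∃ a : A,
        0 < r F₁ F₂ ∧ F₁ a ≠ F₂ a ∧
        w = min
          ((∑ F₃ ∈ ℬ.filter (fun F₃ => F₁ a ≠ F₃ a), r F₁ F₃) / ∑ F₃ ∈ ℬ, r F₁ F₃)
          ((∑ F₃ ∈ 𝒜.filter (fun F₃ => F₂ a ≠ F₃ a), r F₃ F₂) / ∑ F₃ ∈ 𝒜, r F₃ F₂)}
      vmin) :
    0 < vmin ∧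
      ∀ 𝒵 ⊆ 𝒜 ∪ ℬ,
        0 < Finset.univ.sup' Finset.univ_nonempty (fun a : A =>
              ∑ F₁ ∈ 𝒵, ∑ F₂ ∈ 𝒵, if F₁ a ≠ F₂ a then r F₁ F₂ else 0) →
          (Finset.univ.sup' Finset.univ_nonempty (fun a : A =>
              ∑ F₁ ∈ 𝒵, ∑ F₂ ∈ 𝒵, if F₁ a ≠ F₂ a then r F₁ F₂ else 0)) / (2 * vmin) ≤
            ∑ F₁ ∈ 𝒵, ∑ F₂ ∈ 𝒜 ∪ ℬ, r F₁ F₂ := by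
  have hpos : 0 < vmin := by
    obtain ⟨F, hF, G, hG, a, hr, hne, hw⟩ := hvmin.1
    rw [hw]
    exact lt_min (sum_filter_div_sum_pos (fun _ _ => hnonneg _ _) hG hne hr)
      (sum_filter_div_sum_pos (fun _ _ => hnonneg _ _) hF hne.symm hr)
  refine ⟨hpos, fun 𝒵 h𝒵 _ => ?_⟩
  rw [div_le_iff₀ (mul_pos two_pos hpos)]
  refine sup'_le _ _ fun a _ => ?_
  have hcover := cutDegree_le_or_cutDegree_le_of_bipartite hsymm hnonneg hzero
    fun F hF G hG hr hne => by
      rw [cutDegree_div_degree_union_of_left a fun G' hG' => hzero F G' (Or.inl ⟨hF, hG'⟩),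
        cutDegree_div_degree_union_of_right hsymm a fun F' hF' => hzero G F' (Or.inr ⟨hG, hF'⟩)]
      exact hvmin.2 ⟨F, hF, G, hG, a, hr, hne, rfl⟩
  calc ∑ F ∈ 𝒵, ∑ G ∈ 𝒵, (if F a ≠ G a then r F G else 0)
      ≤ 2 * vmin * ∑ F ∈ 𝒵, degree (𝒜 ∪ ℬ) r F :=
        sum_sum_ite_ne_le_two_mul_sum_degree hsymm hnonneg h𝒵 hpos.le
          fun F hF G hG => hcover F (h𝒵 hF) G (h𝒵 hG)
    _ = (∑ F ∈ 𝒵, ∑ G ∈ 𝒜 ∪ ℬ, r F G) * (2 * vmin) := by rw [mul_comm]; rfl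

/-- (Our variant is at least as strong as the relational adversary.)
Let `𝒜, ℬ` be disjoint finite sets of functions `A → B`, let `r` be the symmetric
extension to `𝒳 = 𝒜 ∪ ℬ` of a nonnegative relation (vanishing on pairs from the same
side).  Assume all the denominators of `θ` are positive and that there is a triple
`(F₁, F₂, a) ∈ 𝒜 × ℬ × A` with `r(F₁,F₂) > 0` and `F₁ a ≠ F₂ a`.  Let
`v_min = max { min(θ(F₁,a), θ(F₂,a)) : r(F₁,F₂) > 0, F₁ a ≠ F₂ a }`.  Then `v_min > 0`,
and for every `𝒵 ⊆ 𝒳` with `q(𝒵) > 0` one has `M(𝒵) ≥ q(𝒵)/(2·v_min)`. -/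
theorem stmt5 {A B : Type*} [Fintype A] [Nonempty A] [DecidableEq B]
    (𝒜 ℬ : Finset (A → B)) (hdisj : Disjoint 𝒜 ℬ)
    (r : (A → B) → (A → B) → ℝ)
    (hsymm : ∀ F₁ F₂, r F₁ F₂ = r F₂ F₁)
    (hnonneg : ∀ F₁ F₂, 0 ≤ r F₁ F₂)
    (hzero : ∀ F₁ F₂, ((F₁ ∈ 𝒜 ∧ F₂ ∈ 𝒜) ∨ (F₁ ∈ ℬ ∧ F₂ ∈ ℬ)) → r F₁ F₂ = 0)
    (hdenA : ∀ F₁ ∈ 𝒜, 0 < ∑ F₃ ∈ ℬ, r F₁ F₃)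
    (hdenB : ∀ F₂ ∈ ℬ, 0 < ∑ F₃ ∈ 𝒜, r F₃ F₂)
    (hex : ∃ F₁ ∈ 𝒜, ∃ F₂ ∈ ℬ, ∃ a : A, 0 < r F₁ F₂ ∧ F₁ a ≠ F₂ a)
    (vmin : ℝ)
    (hvmin : IsGreatest {w : ℝ | ∃ F₁ ∈ 𝒜, ∃ F₂ ∈ ℬ, ∃ a : A,
        0 < r F₁ F₂ ∧ F₁ a ≠ F₂ a ∧
        w = min
          ((∑ F₃ ∈ ℬ.filter (fun F₃ => F₁ a ≠ F₃ a), r F₁ F₃) / ∑ F₃ ∈ ℬ, r F₁ F₃)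
          ((∑ F₃ ∈ 𝒜.filter (fun F₃ => F₂ a ≠ F₃ a), r F₃ F₂) / ∑ F₃ ∈ 𝒜, r F₃ F₂)}
      vmin) :
    0 < vmin ∧
      ∀ 𝒵 ⊆ 𝒜 ∪ ℬ,
        0 < Finset.univ.sup' Finset.univ_nonempty (fun a : A =>
              ∑ F₁ ∈ 𝒵, ∑ F₂ ∈ 𝒵, if F₁ a ≠ F₂ a then r F₁ F₂ else 0) →
          (Finset.univ.sup' Finset.univ_nonempty (fun a : A =>
              ∑ F₁ ∈ 𝒵, ∑ F₂ ∈ 𝒵, if F₁ a ≠ F₂ a then r F₁ F₂ else 0)) / (2 * vmin) ≤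
            ∑ F₁ ∈ 𝒵, ∑ F₂ ∈ 𝒜 ∪ ℬ, r F₁ F₂ :=
  stmt5_general 𝒜 ℬ r hsymm hnonneg hzero vmin hvmin
end

section
/- Let x ∈ {1} × [n]^L, v ∈ V, and j ∈ [L], and let g be the vertex congestion of 𝒫. Then the number of sequences y ∈ {1} × [n]^L with max{i : (x_1, …, x_i) = (y_1, …, y_i)} = j and with v appearing on Tail(j, S_y) is at most N_v(x_j)·n^{L−j} + L·g·n^{L−j−1}. -/
open Finset
open Fin.NatCast

variable {n L : ℕ}

/-- The segment of the staircase between milestones `x i` and `x (i+1)` (`0`-based `i`),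
namely the path `P^{x_i, x_{i+1}}` of the all-pairs set of paths `P`. -/
def seg (P : Fin n → Fin n → List (Fin n)) (x : Fin (L + 1) → Fin n) (i : ℕ) :
    List (Fin n) :=
  P (x i) (x (i + 1))

/-- The staircase `S_x` induced by the milestone sequence `x` and the all-pairs set of
paths `P`: the concatenation `P^{x_1,x_2} ∘ P^{x_2,x_3} ∘ ⋯ ∘ P^{x_L,x_{L+1}}` (as a walk;
each path after the first contributes everything but its first vertex). -/
def staircase (P : Fin n → Fin n → List (Fin n)) (x : Fin (L + 1) → Fin n) :
    List (Fin n) :=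
  x 0 :: ((List.range L).flatMap fun i => (seg P x i).tail)

/-- The largest (`0`-based) segment index whose path contains `v`. -/
def segIdx (P : Fin n → Fin n → List (Fin n)) (x : Fin (L + 1) → Fin n) (v : Fin n) : ℕ :=
  ((Finset.range L).filter fun i => v ∈ seg P x i).sup id

/-- The value function `f_x`: `f_x v = dist(v, 1)` if `v` is not on the staircase `S_x`,
and `f_x v = −(i·n + j)` if `v` is on `S_x`, where `i` is the maximum (1-based) index with
`v ∈ P^{x_i,x_{i+1}}` and `v` is the `j`-th vertex of `P^{x_i,x_{i+1}}`. -/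
noncomputable def fx (G : SimpleGraph (Fin n)) (P : Fin n → Fin n → List (Fin n))
    (v₁ : Fin n) (x : Fin (L + 1) → Fin n) (v : Fin n) : ℤ :=
  if v ∈ staircase P x then
    -(((segIdx P x v : ℤ) + 1) * (n : ℤ) + (((seg P x (segIdx P x v)).idxOf v : ℤ) + 1))
  else (G.dist v v₁ : ℤ)

/-- The function `g_{x,b}`, hiding the bit `b` at the last milestone `x_{L+1}` (second
component `b ∈ {0,1}` there, `−1` elsewhere). -/
noncomputable def gx (G : SimpleGraph (Fin n)) (P : Fin n → Fin n → List (Fin n))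
    (v₁ : Fin n) (x : Fin (L + 1) → Fin n) (b : Bool) (v : Fin n) : ℤ × ℤ :=
  (fx G P v₁ x v, if v = x (Fin.last L) then (if b then 1 else 0) else -1)

/-- The maximum (1-based) index `j` such that `(x_1, …, x_j) = (y_1, …, y_j)`. -/
def maxPrefix (x y : Fin (L + 1) → Fin n) : ℕ :=
  ((Finset.Icc 1 (L + 1)).filter fun j => ∀ i : Fin (L + 1), (i : ℕ) < j → x i = y i).sup id

/-- The relation `r`: zero if the bits agree or either sequence is not good (injective),
and `n ^ maxPrefix` otherwise. -/
noncomputable def rrel (p q : (Fin (L + 1) → Fin n) × Bool) : ℝ :=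
  if p.2 = q.2 ∨ ¬ Function.Injective p.1 ∨ ¬ Function.Injective q.1 then 0
  else (n : ℝ) ^ maxPrefix p.1 q.1

/-- The relation `r_v`: equal to `r` if `g_{x,b₁}(v) ≠ g_{y,b₂}(v)` and `0` otherwise. -/
noncomputable def rv (G : SimpleGraph (Fin n)) (P : Fin n → Fin n → List (Fin n))
    (v₁ v : Fin n) (p q : (Fin (L + 1) → Fin n) × Bool) : ℝ :=
  if gx G P v₁ p.1 p.2 v ≠ gx G P v₁ q.1 q.2 v then rrel p q else 0

/-- The relation `r̃_v`: equal to `r_v` if `μ(S_x, v) ≤ μ(S_y, v)` and `0` otherwise. -/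
noncomputable def rvt (G : SimpleGraph (Fin n)) (P : Fin n → Fin n → List (Fin n))
    (v₁ v : Fin n) (p q : (Fin (L + 1) → Fin n) × Bool) : ℝ :=
  if (staircase P p.1).count v ≤ (staircase P q.1).count v then rv G P v₁ v p q else 0

/-- `Tail(j, S_x)` for a 1-based index `j ∈ [L]`: the walk
`P^{x_j,x_{j+1}} ∘ ⋯ ∘ P^{x_L,x_{L+1}}` with the first occurrence of `x_j` removed.
For `j = L + 1` it is the empty sequence. -/
def tailWalk (P : Fin n → Fin n → List (Fin n)) (x : Fin (L + 1) → Fin n) (j : ℕ) :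
    List (Fin n) :=
  if j ≤ L then
    (seg P x (j - 1) ++ ((List.range L).drop j).flatMap fun i => (seg P x i).tail).erase
      (x (j - 1))
  else []

/-- The vertex congestion of the all-pairs set of paths `P`:
`max_{w} Σ_{u,v} (number of occurrences of w on P^{u,v})`. -/
def congestion (P : Fin n → Fin n → List (Fin n)) : ℕ :=
  Finset.univ.sup fun w => ∑ u : Fin n, ∑ v : Fin n, (P u v).count w

/-- `N_v(u)`: the number of paths in `P` that start at `u` and contain `v`. -/
def Npaths (P : Fin n → Fin n → List (Fin n)) (v u : Fin n) : ℕ :=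
  (Finset.univ.filter fun w => v ∈ P u w).card

/-! A sequence `y` counted here agrees with `x` on its first `j` entries, and `v` lies on one of
its segments `P^{y_i, y_{i+1}}` with `i ≥ j`. For `i = j` the endpoint `y_{j+1}` must be one of the
`N_v(x_j)` endpoints of a path from `x_j` through `v`, and the remaining `L - j` entries are free.
For `i > j`, once `y_i = u` is fixed there are `N_v(u)` choices for `y_{i+1}` and `n^{L-j-1}` for
the rest; summing `N_v(u)` over `u` gives at most the congestion `g`, and there are fewer than `L`
such `i`. -/

theorem card_filter_eq_on_and_mem {ι β : Type*} [Fintype ι] [DecidableEq ι] [Fintype β]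
    [DecidableEq β] (F : Finset ι) (z : ι → β) {s : ι} (hs : s ∉ F) (A : Finset β)
    [DecidablePred fun y : ι → β => (∀ c ∈ F, y c = z c) ∧ y s ∈ A] :
    #{y : ι → β | (∀ c ∈ F, y c = z c) ∧ y s ∈ A} =
      #A * Fintype.card β ^ (Fintype.card ι - #F - 1) := by
  have hbox : ({y : ι → β | (∀ c ∈ F, y c = z c) ∧ y s ∈ A} : Finset _) =
      Fintype.piFinset fun c => if c ∈ F then {z c} else if c = s then A else univ := by
    ext y
    simp only [mem_filter, mem_univ, true_and, Fintype.mem_piFinset]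
    constructor
    · rintro ⟨hF, hA⟩ c
      split_ifs with hc hcs
      · exact mem_singleton.2 (hF c hc)
      · exact hcs ▸ hA
      · exact mem_univ _
    · intro h
      exact ⟨fun c hc => by simpa [hc] using h c, by simpa [hs] using h s⟩
  have hcompl : ({c | c ∉ F} : Finset ι) = Fᶜ := by ext; simp
  have hsF : s ∈ Fᶜ := mem_compl.2 hs
  rw [hbox, Fintype.card_piFinset]
  simp only [apply_ite card, card_singleton, card_univ]
  rw [prod_ite, prod_const_one, one_mul, hcompl, ← mul_prod_erase _ _ hsF, if_pos rfl,
    prod_congr rfl fun c hc => if_neg (ne_of_mem_erase hc), prod_const, card_erase_of_mem hsF,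
    card_compl]

theorem eq_of_lt_maxPrefix {x y : Fin (L + 1) → Fin n} {c : Fin (L + 1)}
    (hc : (c : ℕ) < maxPrefix x y) : x c = y c := by
  unfold maxPrefix at hc
  set S := {k ∈ Icc 1 (L + 1) | ∀ i : Fin (L + 1), (i : ℕ) < k → x i = y i}
  obtain ⟨k, hk, hsup⟩ :=
    S.exists_mem_eq_sup (nonempty_of_ne_empty (by rintro h; simp [h] at hc)) id
  exact (mem_filter.1 hk).2 c (by simpa [hsup] using hc)

theorem seg_eq_of_lt (P : Fin n → Fin n → List (Fin n)) (y : Fin (L + 1) → Fin n) {i : ℕ}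
    (hi : i < L) : seg P y i = P (y ⟨i, by omega⟩) (y ⟨i + 1, by omega⟩) := by
  have h1 : (i : Fin (L + 1)) = ⟨i, by omega⟩ := Fin.ext (Fin.val_cast_of_lt (by omega))
  have h2 : ((i : Fin (L + 1)) + 1) = ⟨i + 1, by omega⟩ := by
    ext; rw [h1, Fin.val_add_one_of_lt]; simp [Fin.lt_def]; omega
  rw [seg, h2, h1]

theorem exists_mem_seg_of_mem_tailWalk {P : Fin n → Fin n → List (Fin n)}
    {y : Fin (L + 1) → Fin n} {v : Fin n} {j : ℕ} (hj : 1 ≤ j) (h : v ∈ tailWalk P y j) :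
    ∃ i ∈ Ico (j - 1) L, v ∈ seg P y i := by
  unfold tailWalk at h
  split_ifs at h with hjL
  · rcases List.mem_append.1 (List.mem_of_mem_erase h) with h | h
    · exact ⟨j - 1, mem_Ico.2 ⟨le_rfl, by omega⟩, h⟩
    · obtain ⟨i, hi, hv⟩ := List.mem_flatMap.1 h
      obtain ⟨m, hm, rfl⟩ := List.mem_drop_iff_getElem.1 hi
      rw [List.length_range] at hm
      rw [List.getElem_range] at hv
      exact ⟨j + m, mem_Ico.2 ⟨by omega, by omega⟩, List.mem_of_mem_tail hv⟩
  · simp at h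

theorem sum_Npaths_le_congestion (P : Fin n → Fin n → List (Fin n)) (v : Fin n) :
    ∑ u, Npaths P v u ≤ congestion P :=
  calc ∑ u, Npaths P v u ≤ ∑ u, ∑ w, (P u w).count v := by
        refine sum_le_sum fun u _ => ?_
        rw [Npaths, card_filter]
        refine sum_le_sum fun w _ => ?_
        split_ifs with h
        · exact List.count_pos_iff.2 h
        · exact Nat.zero_le _
    _ ≤ congestion P :=
        le_sup (f := fun w => ∑ u : Fin n, ∑ v : Fin n, (P u v).count w) (mem_univ v)

-- In the statement `x (j - 1)` subtracts in `Fin (L + 1)`, not in `ℕ`.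
theorem natCast_sub_one_eq_mk {j : ℕ} (hj : 1 ≤ j) (hjL : j ≤ L) :
    ((j : Fin (L + 1)) - 1) = ⟨j - 1, by omega⟩ := by
  refine (eq_sub_of_add_eq (Fin.ext ?_)).symm
  rw [Fin.val_add_one_of_lt (by simp [Fin.lt_def]; omega), Fin.val_cast_of_lt (by omega)]
  exact Nat.sub_add_cancel hj

-- Indices are `0`-based: `y` agrees with `x` on its first `j` entries and `v` lies on `seg P y i`.
def prefixSegHits (P : Fin n → Fin n → List (Fin n)) (x : Fin (L + 1) → Fin n) (j : ℕ)
    (v : Fin n) (i : ℕ) : Finset (Fin (L + 1) → Fin n) :=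
  {y | (∀ c : Fin (L + 1), (c : ℕ) < j → y c = x c) ∧ v ∈ seg P y i}

section Counting

variable (P : Fin n → Fin n → List (Fin n)) (x : Fin (L + 1) → Fin n) (v : Fin n) {j : ℕ}

theorem card_prefixSegHits_pred (hj : 1 ≤ j) (hjL : j ≤ L) :
    #(prefixSegHits P x j v (j - 1)) = Npaths P v (x (j - 1)) * n ^ (L - j) := by
  have hbox : prefixSegHits P x j v (j - 1) =
      ({y | (∀ c ∈ ({c | (c : ℕ) < j} : Finset (Fin (L + 1))), y c = x c) ∧
        y ⟨j, by omega⟩ ∈ ({w | v ∈ P (x (j - 1)) w} : Finset (Fin n))} :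
          Finset (Fin (L + 1) → Fin n)) := by
    ext y
    simp only [prefixSegHits, mem_filter, mem_univ, true_and]
    refine and_congr_right fun hpre => ?_
    rw [seg_eq_of_lt P y (by omega : j - 1 < L), natCast_sub_one_eq_mk hj hjL,
      hpre _ (by simp; omega)]
    simp only [Nat.sub_add_cancel hj]
  rw [hbox, card_filter_eq_on_and_mem _ _ (by simp), Fin.card_filter_val_lt, Npaths,
    Fintype.card_fin, Fintype.card_fin]
  congr 2
  omega

theorem card_prefixSegHits_le {i : ℕ} (hji : j ≤ i) (hiL : i < L) :
    #(prefixSegHits P x j v i) ≤ congestion P * n ^ (L - j - 1) := by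
  set F : Finset (Fin (L + 1)) :=
    insert ⟨i, by omega⟩ ({c | (c : ℕ) < j} : Finset (Fin (L + 1)))
  have hF : #F = j + 1 := by
    rw [card_insert_of_notMem (by simp; omega), Fin.card_filter_val_lt]
    omega
  have hcover : prefixSegHits P x j v i ⊆ univ.biUnion fun u =>
      ({y | (∀ c ∈ F, y c = Function.update x ⟨i, by omega⟩ u c) ∧
        y ⟨i + 1, by omega⟩ ∈ ({w | v ∈ P u w} : Finset (Fin n))} :
          Finset (Fin (L + 1) → Fin n)) := by
    intro y hy
    simp only [prefixSegHits, mem_filter, mem_univ, true_and] at hy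
    obtain ⟨hpre, hv⟩ := hy
    rw [seg_eq_of_lt P y hiL] at hv
    simp only [mem_biUnion, mem_univ, true_and, mem_filter]
    refine ⟨y ⟨i, by omega⟩, fun c hc => ?_, hv⟩
    rcases mem_insert.1 hc with rfl | hc
    · simp
    · have hci : c ≠ ⟨i, by omega⟩ := by rintro rfl; simp at hc; omega
      rw [Function.update_of_ne hci, hpre c (by simpa using hc)]
  calc #(prefixSegHits P x j v i)
      ≤ ∑ u, Npaths P v u * n ^ (L - j - 1) := by
        refine (card_le_card hcover).trans (card_biUnion_le.trans (sum_le_sum fun u _ => ?_))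
        rw [card_filter_eq_on_and_mem _ _ (by simp [F]; omega), hF, Npaths,
          Fintype.card_fin, Fintype.card_fin]
        exact (congr_arg _ (congr_arg _ (by omega))).le
    _ ≤ congestion P * n ^ (L - j - 1) := by
        rw [← sum_mul]
        exact Nat.mul_le_mul_right _ (sum_Npaths_le_congestion P v)

theorem card_maxPrefix_eq_mem_tailWalk_le (hj : 1 ≤ j) (hjL : j ≤ L) :
    #{y | maxPrefix x y = j ∧ v ∈ tailWalk P y j} ≤
      Npaths P v (x (j - 1)) * n ^ (L - j) + (L - j) * (congestion P * n ^ (L - j - 1)) := by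
  have hcover : ({y | maxPrefix x y = j ∧ v ∈ tailWalk P y j} : Finset _) ⊆
      prefixSegHits P x j v (j - 1) ∪ (Ico j L).biUnion (prefixSegHits P x j v) := by
    intro y hy
    simp only [mem_filter, mem_univ, true_and] at hy
    obtain ⟨hmax, htail⟩ := hy
    have hpre : ∀ c : Fin (L + 1), (c : ℕ) < j → y c = x c := fun c hc =>
      (eq_of_lt_maxPrefix (hmax ▸ hc)).symm
    obtain ⟨i, hi, hv⟩ := exists_mem_seg_of_mem_tailWalk hj htail
    have hy : y ∈ prefixSegHits P x j v i := mem_filter.2 ⟨mem_univ _, hpre, hv⟩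
    rcases (mem_Ico.1 hi).1.eq_or_lt with rfl | hlt
    · exact mem_union_left _ hy
    · exact mem_union_right _ (mem_biUnion.2 ⟨i, mem_Ico.2 ⟨by omega, (mem_Ico.1 hi).2⟩, hy⟩)
  calc _ ≤ #(prefixSegHits P x j v (j - 1)) + ∑ i ∈ Ico j L, #(prefixSegHits P x j v i) :=
        (card_le_card hcover).trans
          ((card_union_le _ _).trans (Nat.add_le_add_left card_biUnion_le _))
    _ ≤ _ := by
        rw [card_prefixSegHits_pred P x v hj hjL]
        refine Nat.add_le_add_left ((sum_le_sum fun i hi => card_prefixSegHits_le P x v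
          (mem_Ico.1 hi).1 (mem_Ico.1 hi).2).trans_eq ?_) _
        rw [sum_const, Nat.card_Ico, smul_eq_mul]

end Counting

theorem natSub_mul_pow_le_mul_zpow {a : ℝ} (ha : 0 ≤ a) {j : ℕ} (hjL : j ≤ L) :
    ((L - j : ℕ) : ℝ) * a ^ (L - j - 1) ≤ L * a ^ ((L : ℤ) - j - 1) := by
  rcases hjL.lt_or_eq with hlt | rfl
  · have hexp : (L : ℤ) - j - 1 = ((L - j - 1 : ℕ) : ℤ) := by omega
    rw [hexp, zpow_natCast]
    gcongr
    exact_mod_cast Nat.sub_le L j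
  · rw [Nat.sub_self, Nat.cast_zero, zero_mul]
    positivity

theorem stmt14_general (hn : 0 < n)
    (P : Fin n → Fin n → List (Fin n))
    (x : Fin (L + 1) → Fin n)
    (v : Fin n) (j : ℕ) (hj1 : 1 ≤ j) (hjL : j ≤ L) :
    (((Finset.univ.filter
        (fun y : Fin (L + 1) → Fin n =>
          y 0 = (⟨0, hn⟩ : Fin n) ∧ maxPrefix x y = j ∧ v ∈ tailWalk P y j)).card : ℝ)) ≤
      (Npaths P v (x (j - 1)) : ℝ) * (n : ℝ) ^ ((L : ℤ) - (j : ℤ)) +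
        (L : ℝ) * (congestion P : ℝ) * (n : ℝ) ^ ((L : ℤ) - (j : ℤ) - 1) := by
  have hcount : #{y | y 0 = (⟨0, hn⟩ : Fin n) ∧ maxPrefix x y = j ∧ v ∈ tailWalk P y j} ≤
      Npaths P v (x (j - 1)) * n ^ (L - j) + (L - j) * (congestion P * n ^ (L - j - 1)) :=
    (card_le_card (monotone_filter_right _ fun _ _ => And.right)).trans
      (card_maxPrefix_eq_mem_tailWalk_le P x v hj1 hjL)
  have hexp : (L : ℤ) - j = ((L - j : ℕ) : ℤ) := by omega
  have hpow := natSub_mul_pow_le_mul_zpow (Nat.cast_nonneg n) hjL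
  calc _ ≤ (Npaths P v (x (j - 1)) : ℝ) * (n : ℝ) ^ (L - j) +
        ((L - j : ℕ) : ℝ) * ((congestion P : ℝ) * (n : ℝ) ^ (L - j - 1)) := by
        exact_mod_cast hcount
    _ ≤ _ := by
        rw [hexp, zpow_natCast, ← hexp]
        nlinarith [(congestion P).cast_nonneg (α := ℝ)]

/-- Let `x ∈ {1} × [n]^L`, `v ∈ V`, `j ∈ [L]`, and let `g` be the vertex
congestion of `𝒫`.  Then the number of sequences `y ∈ {1} × [n]^L` with
`maxPrefix x y = j` and `v` appearing on `Tail(j, S_y)` is at most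
`N_v(x_j) · n^{L−j} + L · g · n^{L−j−1}`. -/
theorem stmt14 (hn : 0 < n) (hL : 0 < L)
    (G : SimpleGraph (Fin n)) (hconn : G.Connected)
    (P : Fin n → Fin n → List (Fin n))
    (hhead : ∀ u v, (P u v).head? = some u)
    (hlast : ∀ u v, (P u v).getLast? = some v)
    (hchain : ∀ u v, (P u v).Chain' G.Adj)
    (hnodup : ∀ u v, (P u v).Nodup)
    (hself : ∀ u, P u u = [u])
    (x : Fin (L + 1) → Fin n) (hx0 : x 0 = (⟨0, hn⟩ : Fin n))
    (v : Fin n) (j : ℕ) (hj1 : 1 ≤ j) (hjL : j ≤ L) :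
    (((Finset.univ.filter
        (fun y : Fin (L + 1) → Fin n =>
          y 0 = (⟨0, hn⟩ : Fin n) ∧ maxPrefix x y = j ∧ v ∈ tailWalk P y j)).card : ℝ)) ≤
      (Npaths P v (x (j - 1)) : ℝ) * (n : ℝ) ^ ((L : ℤ) - (j : ℤ)) +
        (L : ℝ) * (congestion P : ℝ) * (n : ℝ) ^ ((L : ℤ) - (j : ℤ) - 1) :=
  stmt14_general hn P x v j hj1 hjL
end

section
/- There exists an all-pairs set of paths 𝒫 in G whose vertex congestion is at most (d+1)·n. -/
/-!
Fix a shortest path `Q g` from `1` to each `g` and let `P u v` be the left translate by `u` of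
`Q (u⁻¹ * v)`; left multiplication is a graph automorphism, so these are paths. A vertex `w`
occurs in `P u v` as often as `u⁻¹ * w` occurs in `Q (u⁻¹ * v)`, so after reindexing the
congestion at `w` is `∑ v, ∑ x, count x (Q v) = ∑ v, |Q v| ≤ n (d + 1)`.
-/

open Finset

theorem List.sum_count_eq_length {α : Type*} [Fintype α] [DecidableEq α] (l : List α) :
    ∑ x : α, l.count x = l.length := by
  simpa using Multiset.sum_count_eq_card (s := univ) (m := (l : Multiset α)) (by simp)

theorem sum_sum_count_map_mul_left {𝒢 : Type*} [Group 𝒢] [Fintype 𝒢] [DecidableEq 𝒢]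
    (Q : 𝒢 → List 𝒢) (w : 𝒢) :
    ∑ u, ∑ v, ((Q (u⁻¹ * v)).map (u * ·)).count w = ∑ v, (Q v).length := by
  calc ∑ u, ∑ v, ((Q (u⁻¹ * v)).map (u * ·)).count w
      = ∑ u, ∑ v, (Q v).count (u⁻¹ * w) := by
        refine sum_congr rfl fun u _ => Fintype.sum_equiv (Equiv.mulLeft u⁻¹) _ _ fun v => ?_
        rw [← List.count_map_of_injective _ _ (mul_right_injective u) (u⁻¹ * w),
          mul_inv_cancel_left]
        rfl
    _ = ∑ v, ∑ x, (Q v).count x := by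
        rw [sum_comm]
        exact sum_congr rfl fun v _ =>
          Fintype.sum_equiv ((Equiv.inv 𝒢).trans (Equiv.mulRight w)) _ _ fun _ => rfl
    _ = ∑ v, (Q v).length := by simp only [List.sum_count_eq_length]

namespace SimpleGraph

variable {𝒢 : Type*} [Group 𝒢] {G : SimpleGraph 𝒢}

theorem Reachable.mul_left (hinv : ∀ g a b, G.Adj a b → G.Adj (g * a) (g * b)) {a b : 𝒢}
    (h : G.Reachable a b) (g : 𝒢) : G.Reachable (g * a) (g * b) :=
  h.map ⟨(g * ·), hinv g _ _⟩

theorem connected_of_closure_eq_top (hinv : ∀ g a b, G.Adj a b → G.Adj (g * a) (g * b))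
    {S : Set 𝒢} (hS : Subgroup.closure S = ⊤) (hreach : ∀ s ∈ S, G.Reachable 1 s) :
    G.Connected := by
  suffices h1 : ∀ g, G.Reachable 1 g from ⟨fun u v => (h1 u).symm.trans (h1 v)⟩
  intro g
  have hg : g ∈ Subgroup.closure S := hS ▸ Subgroup.mem_top g
  induction hg using Subgroup.closure_induction with
  | mem s hs => exact hreach s hs
  | one => rfl
  | mul a b _ _ ha hb => exact ha.trans (by simpa using hb.mul_left hinv a)
  | inv a _ ha => exact (by simpa using ha.mul_left hinv a⁻¹ : G.Reachable a⁻¹ 1).symm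

variable [Fintype 𝒢] [DecidableEq 𝒢]

theorem Connected.exists_paths_congestion_le (hinv : ∀ g a b, G.Adj a b → G.Adj (g * a) (g * b))
    (hconn : G.Connected) :
    ∃ P : 𝒢 → 𝒢 → List 𝒢,
      (∀ u v, (P u v).head? = some u) ∧
      (∀ u v, (P u v).getLast? = some v) ∧
      (∀ u v, (P u v).IsChain G.Adj) ∧
      (∀ u v, (P u v).Nodup) ∧
      (∀ u, P u u = [u]) ∧
      (∀ w : 𝒢, ∑ u : 𝒢, ∑ v : 𝒢, (P u v).count w ≤ (G.diam + 1) * Fintype.card 𝒢) := by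
  choose p hp hlen using fun g => (hconn 1 g).exists_path_of_dist
  have hsupport_one : ∀ {g} (_ : g = 1), (p g).support = [1] := by
    rintro _ rfl
    rw [Walk.eq_nil_iff_nil.2 ((Walk.length_eq_zero_iff (p := p 1)).1 (by simp [hlen]))]
    rfl
  refine ⟨fun u v => (p (u⁻¹ * v)).support.map (u * ·), fun u v => ?_, fun u v => ?_,
    fun u v => ?_, fun u v => (hp _).support_nodup.map (mul_right_injective u), fun u => ?_,
    fun w => ?_⟩
  · simp [List.head?_eq_some_head (p _).support_ne_nil]
  · simp [List.getLast?_eq_some_getLast (p _).support_ne_nil]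
  · exact (List.isChain_map _).2 ((p _).isChain_adj_support.imp (hinv u))
  · simp [hsupport_one (inv_mul_cancel u)]
  · have hdiam : G.ediam ≠ ⊤ := connected_iff_ediam_ne_top.1 hconn
    calc ∑ u, ∑ v, ((p (u⁻¹ * v)).support.map (u * ·)).count w
        = ∑ v, (p v).support.length := sum_sum_count_map_mul_left (fun g => (p g).support) w
      _ ≤ ∑ _v : 𝒢, (G.diam + 1) := sum_le_sum fun v _ => by
          rw [Walk.length_support, hlen]
          exact Nat.add_le_add_right (dist_le_diam hdiam) 1
      _ = (G.diam + 1) * Fintype.card 𝒢 := by simp [mul_comm]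

end SimpleGraph

/-- Let `G` be the undirected Cayley graph of a finite group `𝒢` with
generating set `S`, with `n` vertices and diameter `d`.  Then there exists an all-pairs
set of paths `𝒫` in `G` whose vertex congestion is at most `(d + 1) · n`. -/
theorem stmt17 {𝒢 : Type*} [Group 𝒢] [Fintype 𝒢] [DecidableEq 𝒢]
    (S : Set 𝒢) (hSgen : Subgroup.closure S = ⊤)
    (G : SimpleGraph 𝒢)
    (hG : ∀ u v, G.Adj u v ↔ u ≠ v ∧ (u⁻¹ * v ∈ S ∨ v⁻¹ * u ∈ S)) :
    ∃ P : 𝒢 → 𝒢 → List 𝒢,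
      (∀ u v, (P u v).head? = some u) ∧
      (∀ u v, (P u v).getLast? = some v) ∧
      (∀ u v, (P u v).Chain' G.Adj) ∧
      (∀ u v, (P u v).Nodup) ∧
      (∀ u, P u u = [u]) ∧
      (∀ w : 𝒢, ∑ u : 𝒢, ∑ v : 𝒢, (P u v).count w ≤ (G.diam + 1) * Fintype.card 𝒢) := by
  have hinv : ∀ g a b, G.Adj a b → G.Adj (g * a) (g * b) := fun g a b hab => by
    simpa only [hG, mul_inv_rev, mul_assoc, inv_mul_cancel_left, ne_eq, mul_right_inj] using hab
  have hS : ∀ s ∈ S, G.Reachable 1 s := fun s hs => by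
    rcases eq_or_ne 1 s with rfl | hs1
    · rfl
    · exact ((hG 1 s).2 ⟨hs1, .inl (by simpa using hs)⟩).reachable
  exact (SimpleGraph.connected_of_closure_eq_top hinv hSgen hS).exists_paths_congestion_le hinv
end

section
/- Assume c ≥ 1 and (2c+1)² ≤ m. Then for every good sequence x ∈ {1} × [m]^{2c}: Σ over good sequences y ∈ {1} × [m]^{2c} of m^{J(x,y)} ≥ (1/(2e))·(c+1)·m^{2c+1}, where e is Euler's number. -/
/-!
The geometric weights `w t = (1 - m⁻²) m^(2t+1)` satisfy `∑_{2t+1 ≤ J} w t ≤ m ^ J`, and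
`2t+1 ≤ J(x,y)` as soon as `y` agrees with `x` on its first `2t+1` entries. Exchanging the sums,
the left side is at least `∑_{t ≤ c} w t · N t`, where `N t ≥ (m - 2c)^(2c-2t)` counts the good
extensions of that prefix of `x`. As `m ≥ (2c+1)²` gives `(1 - 2c/m)^(2c) ≥ 1/e` and
`1 - m⁻² ≥ 1/2`, each of the `c+1` terms is at least `m^(2c+1) / (2e)`.
-/

/-- `J(x,y)`: the maximum odd (1-based) index `j ∈ [2c+1]` such that
`(x_1, …, x_j) = (y_1, …, y_j)`. -/
def Jodd {m c : ℕ} (x y : Fin (2 * c + 1) → Fin m) : ℕ :=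
  ((Finset.Icc 1 (2 * c + 1)).filter fun j =>
    Odd j ∧ ∀ i : Fin (2 * c + 1), (i : ℕ) < j → x i = y i).sup id

open Finset Function Real

theorem descFactorial_le_card_injective_extending {ι α : Type*} [Fintype ι] [DecidableEq ι]
    [Fintype α] [DecidableEq α] (p : ι → Prop) [DecidablePred p] {x : ι → α}
    (hx : Injective x) :
    (Fintype.card α - Fintype.card {i // p i}).descFactorial (Fintype.card {i // ¬ p i}) ≤
      #{y : ι → α | Injective y ∧ ∀ i, p i → x i = y i} := by
  set s := (univ.filter p).image x
  have hs : s.card = Fintype.card {i // p i} := by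
    rw [card_image_of_injective _ hx, Fintype.card_subtype]
  let extend (e : {i // ¬ p i} ↪ ↥sᶜ) (i : ι) : α :=
    if h : p i then x (⟨i, h⟩ : {i // p i}) else e ⟨i, h⟩
  have hextend (e) : Injective (extend e) :=
    (hx.comp Subtype.val_injective).dite p (Subtype.val_injective.comp e.injective)
      fun {i i'} {hi} {_} h => (mem_compl.1 (e ⟨i', _⟩).2)
        (mem_image.2 ⟨i, by simpa using hi, h⟩)
  rw [← hs, ← card_compl, ← Fintype.card_coe sᶜ, ← Fintype.card_embedding_eq, ← card_univ]
  refine card_le_card_of_injOn extend (fun e _ => ?_) fun e₁ _ e₂ _ h => ?_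
  · simp only [coe_filter, Set.mem_ofPred_eq, mem_univ, true_and]
    exact ⟨hextend e, fun i hi => by simp [extend, hi]⟩
  · ext ⟨i, hi⟩
    simpa [extend, hi] using congrFun h i

theorem pow_le_card_injective_agreeing_below {m n j : ℕ} (hj : j ≤ n) (hn : n ≤ m)
    {x : Fin n → Fin m} (hx : Injective x) :
    (m + 1 - n) ^ (n - j) ≤
      #{y : Fin n → Fin m | Injective y ∧ ∀ i : Fin n, (i : ℕ) < j → x i = y i} := by
  have hlt : Fintype.card {i : Fin n // (i : ℕ) < j} = j := by
    rw [Fintype.card_subtype, Fin.card_filter_val_lt, min_eq_right hj]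
  have hge : Fintype.card {i : Fin n // ¬ (i : ℕ) < j} = n - j := by
    rw [Fintype.card_subtype_compl, hlt, Fintype.card_fin]
  calc (m + 1 - n) ^ (n - j) = (m - j + 1 - (n - j)) ^ (n - j) := by congr 1; omega
    _ ≤ (m - j).descFactorial (n - j) := Nat.pow_sub_le_descFactorial _ _
    _ ≤ _ := by
      have := descFactorial_le_card_injective_extending (fun i : Fin n => (i : ℕ) < j) hx
      rw [hlt, hge, Fintype.card_fin] at this
      convert this

theorem exp_neg_one_le_one_sub_pow {a : ℝ} {n : ℕ} (h : (n + 1) * a ≤ 1) :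
    exp (-1) ≤ (1 - a) ^ n := by
  rcases Nat.eq_zero_or_pos n with rfl | hn
  · simp
  have hn' : (1 : ℝ) ≤ n := by exact_mod_cast hn
  have ha1 : 0 < 1 - a := by nlinarith
  have hstep : exp (-(a / (1 - a))) ≤ 1 - a := by
    rw [exp_neg, inv_le_comm₀ (exp_pos _) ha1]
    calc (1 - a)⁻¹ = a / (1 - a) + 1 := by field_simp; ring
      _ ≤ exp (a / (1 - a)) := add_one_le_exp _
  have hexp : -1 ≤ n * -(a / (1 - a)) := by
    rw [mul_neg, neg_le_neg_iff, ← mul_div_assoc, div_le_one ha1]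
    linarith
  calc exp (-1) ≤ exp (n * -(a / (1 - a))) := exp_le_exp.2 hexp
    _ = exp (-(a / (1 - a))) ^ n := exp_nat_mul _ _
    _ ≤ (1 - a) ^ n := pow_le_pow_left₀ (exp_nonneg _) hstep _

theorem exp_neg_one_mul_pow_le_sub_pow {m : ℝ} {n k : ℕ} (hk : k ≤ n) (hm : (n + 1) * n ≤ m) :
    exp (-1) * m ^ k ≤ (m - n) ^ k := by
  rcases Nat.eq_zero_or_pos n with rfl | hn
  · obtain rfl : k = 0 := by omega
    simp
  have hm0 : 0 < m := lt_of_lt_of_le (by positivity) hm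
  have hmn : (n : ℝ) / m ≤ 1 := by
    rw [div_le_one hm0]; nlinarith
  have hbase : exp (-1) ≤ (1 - n / m) ^ k :=
    (exp_neg_one_le_one_sub_pow (by rw [mul_div_assoc', div_le_one hm0]; linarith)).trans
      (pow_le_pow_of_le_one (by linarith) (by linarith [div_nonneg (Nat.cast_nonneg n) hm0.le]) hk)
  calc exp (-1) * m ^ k ≤ (1 - n / m) ^ k * m ^ k := by gcongr
    _ = (m - n) ^ k := by rw [← mul_pow]; congr 1; field_simp

theorem one_sub_inv_sq_mul_pow_nonneg {r : ℝ} (hr : 1 ≤ r) (k : ℕ) :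
    0 ≤ (1 - (r ^ 2)⁻¹) * r ^ k :=
  mul_nonneg (sub_nonneg.2 (inv_le_one_of_one_le₀ (one_le_pow₀ hr))) (by positivity)

theorem sum_odd_pow_weights_le_pow {r : ℝ} (hr : 1 ≤ r) (K n : ℕ) :
    ∑ t ∈ range K, (if 2 * t + 1 ≤ n then (1 - (r ^ 2)⁻¹) * r ^ (2 * t + 1) else 0) ≤ r ^ n := by
  have hr0 : 0 < r := by linarith
  rw [← sum_filter]
  calc ∑ t ∈ range K with 2 * t + 1 ≤ n, (1 - (r ^ 2)⁻¹) * r ^ (2 * t + 1)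
      ≤ ∑ t ∈ range ((n + 1) / 2), (1 - (r ^ 2)⁻¹) * r ^ (2 * t + 1) :=
        sum_le_sum_of_subset_of_nonneg
          (fun t ht => by simp only [mem_filter, mem_range] at ht ⊢; omega)
          fun t _ _ => one_sub_inv_sq_mul_pow_nonneg hr _
    _ = r⁻¹ * ((r ^ 2) ^ ((n + 1) / 2) - 1) := by
        rw [← geom_sum_mul, sum_mul, mul_sum]
        refine sum_congr rfl fun t _ => ?_
        field_simp
        ring
    _ ≤ r⁻¹ * r ^ (n + 1) := by
        gcongr
        calc (r ^ 2) ^ ((n + 1) / 2) - 1 ≤ r ^ (2 * ((n + 1) / 2)) := by rw [pow_mul]; linarith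
          _ ≤ r ^ (n + 1) := pow_le_pow_right₀ hr (by omega)
    _ = r ^ n := by field_simp; ring

theorem one_div_two_exp_mul_pow_le {m : ℝ} {c t : ℕ} (hc : 1 ≤ c) (ht : t ≤ c)
    (hm : (2 * c + 1) ^ 2 ≤ m) :
    1 / (2 * exp 1) * m ^ (2 * c + 1) ≤
      (1 - (m ^ 2)⁻¹) * m ^ (2 * t + 1) * (m - 2 * c) ^ (2 * c - 2 * t) := by
  have hc' : (1 : ℝ) ≤ c := by exact_mod_cast hc
  have hm9 : 9 ≤ m := by nlinarith
  have hhalf : (1 : ℝ) / 2 ≤ 1 - (m ^ 2)⁻¹ := by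
    have := inv_anti₀ (by norm_num) (show (2 : ℝ) ≤ m ^ 2 by nlinarith)
    linarith
  have hexp := exp_neg_one_mul_pow_le_sub_pow (m := m) (n := 2 * c) (k := 2 * c - 2 * t)
    (by omega) (by push_cast; nlinarith)
  push_cast at hexp
  have hpow : m ^ (2 * c + 1) = m ^ (2 * t + 1) * m ^ (2 * c - 2 * t) := by
    rw [← pow_add]; congr 1; omega
  calc 1 / (2 * exp 1) * m ^ (2 * c + 1)
      = 1 / 2 * (m ^ (2 * t + 1) * (exp (-1) * m ^ (2 * c - 2 * t))) := by
        rw [hpow, exp_neg]; ring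
    _ ≤ (1 - (m ^ 2)⁻¹) * (m ^ (2 * t + 1) * (m - 2 * c) ^ (2 * c - 2 * t)) := by
        have : 0 ≤ m := by nlinarith
        gcongr
    _ = _ := by ring

theorem le_Jodd_of_agree {m c j : ℕ} {x y : Fin (2 * c + 1) → Fin m} (hj : Odd j)
    (hj1 : 1 ≤ j) (hjc : j ≤ 2 * c + 1) (h : ∀ i : Fin (2 * c + 1), (i : ℕ) < j → x i = y i) :
    j ≤ Jodd x y :=
  le_sup (f := id) (mem_filter.2 ⟨mem_Icc.2 ⟨hj1, hjc⟩, hj, h⟩)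

theorem pow_le_card_le_Jodd {m c t : ℕ} (hm : 0 < m) (hcm : 2 * c + 1 ≤ m) (ht : t ≤ c)
    {x : Fin (2 * c + 1) → Fin m} (hx0 : x 0 = ⟨0, hm⟩) (hx : Injective x) :
    (m - 2 * c) ^ (2 * c - 2 * t) ≤
      #{y ∈ univ.filter (fun y : Fin (2 * c + 1) → Fin m => y 0 = ⟨0, hm⟩ ∧ Injective y) |
        2 * t + 1 ≤ Jodd x y} := by
  have hagree := pow_le_card_injective_agreeing_below (j := 2 * t + 1) (by omega) hcm hx
  rw [show m + 1 - (2 * c + 1) = m - 2 * c by omega,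
    show 2 * c + 1 - (2 * t + 1) = 2 * c - 2 * t by omega] at hagree
  refine hagree.trans (card_le_card fun y hy => ?_)
  simp only [mem_filter, mem_univ, true_and] at hy ⊢
  exact ⟨⟨hx0 ▸ (hy.2 0 (by simp)).symm, hy.1⟩,
    le_Jodd_of_agree ⟨t, rfl⟩ (by omega) (by omega) hy.2⟩

/-- Assume `c ≥ 1` and `(2c+1)² ≤ m`.  Then for every good sequence
`x ∈ {1} × [m]^{2c}`:
`Σ over good sequences y ∈ {1} × [m]^{2c} of m^{J(x,y)} ≥ (1/(2e)) · (c+1) · m^{2c+1}`. -/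
theorem stmt19 (m c : ℕ) (hm : 0 < m) (hc : 1 ≤ c) (hcm : (2 * c + 1) ^ 2 ≤ m)
    (x : Fin (2 * c + 1) → Fin m) (hx0 : x 0 = (⟨0, hm⟩ : Fin m))
    (hxgood : Function.Injective x) :
    (1 / (2 * Real.exp 1)) * ((c : ℝ) + 1) * (m : ℝ) ^ (2 * c + 1) ≤
      ∑ y ∈ Finset.univ.filter
          (fun y : Fin (2 * c + 1) → Fin m =>
            y 0 = (⟨0, hm⟩ : Fin m) ∧ Function.Injective y),
        (m : ℝ) ^ Jodd x y := by
  set G := Finset.univ.filter fun y : Fin (2 * c + 1) → Fin m =>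
    y 0 = (⟨0, hm⟩ : Fin m) ∧ Function.Injective y
  set w : ℕ → ℝ := fun t => (1 - ((m : ℝ) ^ 2)⁻¹) * (m : ℝ) ^ (2 * t + 1)
  have hm1 : (1 : ℝ) ≤ m := by exact_mod_cast hm
  have hcm' : 2 * c + 1 ≤ m := le_trans (by nlinarith) hcm
  have hcast : ((m - 2 * c : ℕ) : ℝ) = m - 2 * c := by
    push_cast [Nat.cast_sub (by omega : 2 * c ≤ m)]; ring
  calc 1 / (2 * exp 1) * ((c : ℝ) + 1) * (m : ℝ) ^ (2 * c + 1)
      = ∑ t ∈ range (c + 1), 1 / (2 * exp 1) * (m : ℝ) ^ (2 * c + 1) := by simp; ring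
    _ ≤ ∑ t ∈ range (c + 1), w t * #{y ∈ G | 2 * t + 1 ≤ Jodd x y} := by
        refine sum_le_sum fun t ht => ?_
        have ht : t ≤ c := Nat.lt_succ_iff.1 (mem_range.1 ht)
        refine (one_div_two_exp_mul_pow_le hc ht (by exact_mod_cast hcm)).trans ?_
        refine mul_le_mul_of_nonneg_left ?_ (one_sub_inv_sq_mul_pow_nonneg hm1 _)
        rw [← hcast]
        exact_mod_cast pow_le_card_le_Jodd hm hcm' ht hx0 hxgood
    _ = ∑ y ∈ G, ∑ t ∈ range (c + 1), if 2 * t + 1 ≤ Jodd x y then w t else 0 := by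
        rw [sum_comm]
        refine sum_congr rfl fun t _ => ?_
        rw [← sum_filter, sum_const, nsmul_eq_mul, mul_comm]
    _ ≤ ∑ y ∈ G, (m : ℝ) ^ Jodd x y :=
        sum_le_sum fun y _ => sum_odd_pow_weights_le_pow hm1 _ _
end
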